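/- The falling factorial x^(n) has the Charlier expansion x^(n) = ∑_{m=0}^n μ^n ((−n)_m/m!) c_m^{(μ)}(x) for nonzero μ. -/

import Mathlib

open Finset

/-- Pochhammer symbol `(a)_k = a(a+1)⋯(a+k−1)`. -/
noncomputable def poch (a : ℝ) (k : ℕ) : ℝ := ∏ j ∈ Finset.range k, (a + j)

/-- Falling factorial `x⁽ⁿ⁾ = x(x-1)⋯(x-n+1)`. -/
noncomputable def fallingFac (x : ℝ) (n : ℕ) : ℝ := ∏ j ∈ Finset.range n, (x - j)

/-- Charlier polynomial `c_n^{(μ)}(x) = ∑_{k=0}^n (−n)_k (−x)_k (−1/μ)^k / k!`. -/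
noncomputable def charlier (n : ℕ) (μ x : ℝ) : ℝ :=
  ∑ k ∈ Finset.range (n + 1),
    poch (-(n : ℝ)) k * poch (-x) k * (-1 / μ) ^ k / (Nat.factorial k)

/-!
Expanding each Charlier polynomial and exchanging the two sums, the coefficient of
`(-x)_k (-1/μ)^k / k!` becomes `∑_m (-1)^m C(n, m) (-m)_k`. Up to sign this is the `n`-th forward
difference at `0` of the falling factorial `m ↦ m^(k)`, a monic polynomial of degree `k ≤ n`:
it vanishes for `k < n` and equals `n!` for `k = n`, so only the top term survives.
-/

open Polynomial
open scoped Nat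

theorem sum_neg_one_pow_mul_choose_mul_eval_descPochhammer {R : Type*} [CommRing R] [IsDomain R]
    {n k : ℕ} (hk : k ≤ n) :
    ∑ m ∈ range (n + 1), (-1) ^ (n - m) * n.choose m * (descPochhammer R k).eval (m : R) =
      if k = n then (n ! : R) else 0 := by
  have hdiff := fwdDiff_iter_eq_sum_shift (1 : R) (descPochhammer R k).eval n 0
  simp only [zsmul_eq_mul, nsmul_one, zero_add, Int.cast_mul, Int.cast_pow, Int.cast_neg,
    Int.cast_one, Int.cast_natCast] at hdiff
  rw [← hdiff]
  split_ifs with hkn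
  · subst hkn
    have hlead := (descPochhammer R k).fwdDiff_iter_degree_eq_factorial
    rw [descPochhammer_natDegree, (monic_descPochhammer R k).leadingCoeff, one_smul] at hlead
    simp [hlead]
  · rw [fwdDiff_iter_eq_zero_of_degree_lt (by rw [descPochhammer_natDegree]; omega)]
    rfl

theorem fallingFac_eq_eval_descPochhammer (x : ℝ) (n : ℕ) :
    fallingFac x n = (descPochhammer ℝ n).eval x :=
  (descPochhammer_eval_eq_prod_range n x).symm

theorem fallingFac_natCast (n m : ℕ) : fallingFac n m = n.descFactorial m := by
  rw [fallingFac_eq_eval_descPochhammer, descPochhammer_eval_eq_descFactorial]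

theorem poch_neg (x : ℝ) (k : ℕ) : poch (-x) k = (-1) ^ k * fallingFac x k :=
  calc poch (-x) k = ∏ j ∈ range k, (-1) * (x - j) := prod_congr rfl fun j _ ↦ by ring
    _ = (-1) ^ k * fallingFac x k := by rw [prod_mul_distrib, prod_const, card_range]; rfl

theorem poch_neg_natCast_of_lt {m k : ℕ} (h : m < k) : poch (-m) k = 0 :=
  prod_eq_zero (mem_range.2 h) (neg_add_cancel _)

theorem poch_neg_natCast_div_factorial (n m : ℕ) :
    poch (-n) m / m ! = (-1) ^ m * n.choose m := by
  rw [poch_neg, fallingFac_natCast, Nat.descFactorial_eq_factorial_mul_choose]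
  push_cast
  field_simp

theorem sum_poch_neg_mul_poch_neg {n k : ℕ} (hk : k ≤ n) :
    ∑ m ∈ range (n + 1), poch (-n) m / m ! * poch (-m) k = if k = n then (n ! : ℝ) else 0 := by
  have hsign : ∀ m ∈ range (n + 1), poch (-n) m / m ! * poch (-m) k =
      (-1) ^ (n + k) * ((-1) ^ (n - m) * n.choose m * (descPochhammer ℝ k).eval (m : ℝ)) := by
    intro m hm
    obtain ⟨d, rfl⟩ := Nat.exists_eq_add_of_le (mem_range_succ_iff.1 hm)
    rw [poch_neg_natCast_div_factorial, poch_neg, fallingFac_eq_eval_descPochhammer,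
      Nat.add_sub_cancel_left]
    have hd : ((-1 : ℝ)) ^ d * (-1) ^ d = 1 := by rw [← mul_pow]; norm_num
    linear_combination
      (-(-1) ^ (m + k) * ((m + d).choose m : ℝ) * (descPochhammer ℝ k).eval (m : ℝ)) * hd
  rw [sum_congr rfl hsign, ← mul_sum, sum_neg_one_pow_mul_choose_mul_eval_descPochhammer hk]
  split_ifs with hkn
  · rw [hkn, ← two_mul, pow_mul, neg_one_sq, one_pow, one_mul]
  · rw [mul_zero]

theorem charlier_eq_sum_range_of_le {m n : ℕ} (hmn : m ≤ n) (μ x : ℝ) :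
    charlier m μ x = ∑ k ∈ range (n + 1), poch (-m) k * poch (-x) k * (-1 / μ) ^ k / k ! := by
  refine sum_subset (range_subset_range.2 (by omega)) fun k _ hk ↦ ?_
  rw [poch_neg_natCast_of_lt (by simpa using hk), zero_mul, zero_mul, zero_div]

theorem fallingFac_charlier_expansion (n : ℕ) (μ : ℝ) (hμ : μ ≠ 0) (x : ℝ) :
    fallingFac x n =
      ∑ m ∈ Finset.range (n + 1),
        μ ^ n * (poch (-(n : ℝ)) m / (Nat.factorial m)) * charlier m μ x := by
  set c : ℕ → ℝ := fun k ↦ μ ^ n * (poch (-x) k * (-1 / μ) ^ k / k !)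
  symm
  calc ∑ m ∈ range (n + 1), μ ^ n * (poch (-n) m / m !) * charlier m μ x
      = ∑ m ∈ range (n + 1), ∑ k ∈ range (n + 1), c k * (poch (-n) m / m ! * poch (-m) k) := by
        refine sum_congr rfl fun m hm ↦ ?_
        rw [charlier_eq_sum_range_of_le (mem_range_succ_iff.1 hm), mul_sum]
        exact sum_congr rfl fun k _ ↦ by ring
    _ = ∑ k ∈ range (n + 1), c k * if k = n then (n ! : ℝ) else 0 := by
        rw [sum_comm]
        refine sum_congr rfl fun k hk ↦ ?_
        rw [← mul_sum, sum_poch_neg_mul_poch_neg (mem_range_succ_iff.1 hk)]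
    _ = c n * n ! := by simp
    _ = fallingFac x n := by
        simp only [c, poch_neg, div_pow]
        field_simp
        rw [← pow_mul, pow_mul', neg_one_sq, one_pow, one_mul]
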